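/- arXiv:2104.11399 — 5 statements merged into one kernel-verified Lean document; each statement's English description precedes it below -/
import Mathlib

section
/- Groupoid cardinality is invariant under equivalence of groupoids: if G and H are tame groupoids (countably many isomorphism classes, all automorphism groups finite) and G is equivalent to H as categories, then χ(G) = χ(H). -/
open CategoryTheory

/-- Groupoid cardinality: sum over isomorphism classes of 1/#Aut. -/
noncomputable def chi (C : Type u) [Category.{v} C] : ℝ :=
  ∑' c : Quotient (isIsomorphicSetoid C), (1 : ℝ) / Nat.card (Aut (Quotient.out c))

/-- Tame: countably many iso classes, finite automorphism groups, convergent sum. -/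
def Tame (C : Type u) [Category.{v} C] : Prop :=
  Countable (Quotient (isIsomorphicSetoid C)) ∧ (∀ x : C, Finite (Aut x)) ∧
    Summable (fun c : Quotient (isIsomorphicSetoid C) =>
      (1 : ℝ) / Nat.card (Aut (Quotient.out c)))

/-- The equivalence induced on isomorphism classes by a categorical equivalence. -/
noncomputable def quotEquivOfEquivalence {G : Type u} [Category.{v} G] {H : Type u₂}
    [Category.{v₂} H] (e : G ≌ H) :
    Quotient (isIsomorphicSetoid G) ≃ Quotient (isIsomorphicSetoid H) where
  toFun := Quotient.map e.functor.obj (fun _ _ ⟨i⟩ => ⟨e.functor.mapIso i⟩)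
  invFun := Quotient.map e.inverse.obj (fun _ _ ⟨i⟩ => ⟨e.inverse.mapIso i⟩)
  left_inv := by
    intro c
    induction c using Quotient.ind
    exact Quotient.sound ⟨e.unitIso.symm.app _⟩
  right_inv := by
    intro c
    induction c using Quotient.ind
    exact Quotient.sound ⟨e.counitIso.app _⟩

/-- Groupoid cardinality is invariant under equivalence of tame groupoids. -/
theorem chi_eq_of_equivalence (G : Type u) [Groupoid.{v} G] (H : Type u₂) [Groupoid.{v₂} H]
    (hG : Tame G) (hH : Tame H) (e : G ≌ H) : chi G = chi H := by
  unfold chi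
  rw [← Equiv.tsum_eq (quotEquivOfEquivalence e)
    (fun c : Quotient (isIsomorphicSetoid H) => (1 : ℝ) / Nat.card (Aut (Quotient.out c)))]
  congr 1
  funext c
  congr 1
  induction c using Quotient.ind with
  | _ x =>
    have h1 : (quotEquivOfEquivalence e ⟦x⟧ : Quotient (isIsomorphicSetoid H))
        = ⟦e.functor.obj x⟧ := rfl
    -- out ⟦y⟧ ≅ y
    have h2 : IsIsomorphic (Quotient.out (⟦e.functor.obj x⟧ : Quotient (isIsomorphicSetoid H)))
        (e.functor.obj x) := Quotient.mk_out (s := isIsomorphicSetoid H) (e.functor.obj x)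
    obtain ⟨i2⟩ := h2
    have h3 : IsIsomorphic (Quotient.out (⟦x⟧ : Quotient (isIsomorphicSetoid G))) x :=
      Quotient.mk_out (s := isIsomorphicSetoid G) x
    obtain ⟨i3⟩ := h3
    rw [h1]
    norm_cast
    calc Nat.card (Aut (Quotient.out (⟦x⟧ : Quotient (isIsomorphicSetoid G))))
        = Nat.card (Aut x) := Nat.card_congr i3.conjAut.toEquiv
      _ = Nat.card (Aut (e.functor.obj x)) :=
          Nat.card_congr (e.fullyFaithfulFunctor.autMulEquivOfFullyFaithful x).toEquiv
      _ = Nat.card (Aut (Quotient.out (⟦e.functor.obj x⟧ : Quotient (isIsomorphicSetoid H)))) :=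
          (Nat.card_congr i2.conjAut.toEquiv).symm
end

section
/- For any k-sheeted covering F : G → H of groupoids with finite automorphism groups, and any object h of H, if g is an object of G with F(g) = h, then #Aut(g) · #{g' : F(g') = h and g' ≅ g} = #Aut(h). -/
open CategoryTheory

/-- A `k`-sheeted covering of groupoids: surjective on objects, unique lifting of
morphisms given a lift of the source, and every fiber has exactly `k` objects. -/
def IsSheetedCovering {G : Type u} {H : Type u₂} [Groupoid.{v} G] [Groupoid.{v₂} H]
    (F : G ⥤ H) (k : ℕ) : Prop :=
  Function.Surjective F.obj ∧
    (∀ (h₁ h₂ : H) (f : h₁ ⟶ h₂) (g₁ : G), F.obj g₁ = h₁ →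
      ∃! p : Σ g₂ : G, g₁ ⟶ g₂, F.obj p.1 = h₂ ∧ HEq (F.map p.2) f) ∧
    (∀ h : H, Nat.card {g : G // F.obj g = h} = k)


private lemma heq_comp_eqToHom_self {C : Type*} [Category C] {X Y Z : C}
    (f : X ⟶ Y) (h : Y = Z) : HEq (f ≫ eqToHom h) f := by subst h; simp

/-- For a `k`-sheeted covering `F : G → H` with finite automorphism groups, an object
`h` of `H` and an object `g` in the fiber over `h`:
`#Aut(g) · #{g' in the fiber over h with g' ≅ g} = #Aut(h)`. -/
theorem card_aut_mul_card_fiber_isoClass (G : Type u) [Groupoid.{v} G]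
    (H : Type u₂) [Groupoid.{v₂} H]
    (hG : ∀ x : G, Finite (Aut x)) (hH : ∀ y : H, Finite (Aut y))
    (F : G ⥤ H) (k : ℕ) (hF : IsSheetedCovering F k)
    (h : H) (g : G) (hg : F.obj g = h) :
    Nat.card (Aut g) * Nat.card {g' : G // F.obj g' = h ∧ Nonempty (g' ≅ g)} =
      Nat.card (Aut h) := by
  subst hg
  obtain ⟨-, hlift, -⟩ := hF
  have Φbij : Function.Bijective
      (fun p : {p : Σ g₂ : G, g ⟶ g₂ // F.obj p.1 = F.obj g} =>
        F.map p.1.2 ≫ eqToHom p.2) := by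
    constructor
    · rintro ⟨p, hp⟩ ⟨q, hq⟩ hpq
      simp only at hpq
      obtain ⟨r, -, hru⟩ := hlift (F.obj g) (F.obj g) (F.map p.2 ≫ eqToHom hp) g rfl
      have h1 := hru p ⟨hp, (heq_comp_eqToHom_self _ _).symm⟩
      have h2 := hru q ⟨hq, by rw [hpq]; exact (heq_comp_eqToHom_self _ _).symm⟩
      exact Subtype.ext (h1.trans h2.symm)
    · intro f
      obtain ⟨r, ⟨hr1, hr2⟩, -⟩ := hlift (F.obj g) (F.obj g) f g rfl
      exact ⟨⟨r, hr1⟩, eq_of_heq ((heq_comp_eqToHom_self _ _).trans hr2)⟩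
  have u0 : ∀ s : {g' : G // F.obj g' = F.obj g ∧ Nonempty (g' ≅ g)}, g ⟶ s.1 :=
    fun s => (Classical.choice s.2.2).symm.hom
  let e2 : {p : Σ g₂ : G, g ⟶ g₂ // F.obj p.1 = F.obj g} ≃
      {g' : G // F.obj g' = F.obj g ∧ Nonempty (g' ≅ g)} × (g ⟶ g) :=
  { toFun := fun p =>
      (⟨p.1.1, p.2, ⟨(Groupoid.isoEquivHom _ _).symm p.1.2 |>.symm⟩⟩,
        p.1.2 ≫ Groupoid.inv (u0 ⟨p.1.1, p.2, ⟨(Groupoid.isoEquivHom _ _).symm p.1.2 |>.symm⟩⟩))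
    invFun := fun q => ⟨⟨q.1.1, q.2 ≫ u0 q.1⟩, q.1.2.1⟩
    left_inv := by
      rintro ⟨⟨g', u⟩, hp⟩
      apply Subtype.ext
      simp
    right_inv := by
      rintro ⟨s, a⟩
      simp }
  have key : Nat.card {p : Σ g₂ : G, g ⟶ g₂ // F.obj p.1 = F.obj g} =
      Nat.card (F.obj g ⟶ F.obj g) := Nat.card_eq_of_bijective _ Φbij
  have hAutG : Nat.card (Aut g) = Nat.card (g ⟶ g) :=
    Nat.card_congr (Groupoid.isoEquivHom g g)
  have hAutH : Nat.card (Aut (F.obj g)) = Nat.card (F.obj g ⟶ F.obj g) :=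
    Nat.card_congr (Groupoid.isoEquivHom _ _)
  calc Nat.card (Aut g) * Nat.card {g' : G // F.obj g' = F.obj g ∧ Nonempty (g' ≅ g)}
      = Nat.card ({g' : G // F.obj g' = F.obj g ∧ Nonempty (g' ≅ g)} × (g ⟶ g)) := by
        rw [Nat.card_prod, hAutG, mul_comm]
    _ = Nat.card {p : Σ g₂ : G, g ⟶ g₂ // F.obj p.1 = F.obj g} := (Nat.card_congr e2).symm
    _ = Nat.card (Aut (F.obj g)) := by rw [key, hAutH]
end

section
/- Uniqueness of groupoid cardinality: if μ is a real-valued function on tame groupoids that (i) is invariant under equivalence, (ii) takes value 1 on the one-object one-morphism groupoid, (iii) satisfies μ(G) = k·μ(H) for every k-sheeted covering G → H, (iv) is additive over binary disjoint unions, and (v) is continuous with respect to filtrations (μ(G) = lim μ(G^(n)) for any filtration G^(n) of G), then μ(G) = χ(G) for every tame groupoid G. -/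
open CategoryTheory

instance fullSubcategoryGroupoid {C : Type u} [Groupoid.{v} C] (P : C → Prop) :
    Groupoid (ObjectProperty.FullSubcategory P) :=
  InducedCategory.groupoid C ObjectProperty.FullSubcategory.obj

instance sumGroupoid {C D : Type u} [Groupoid.{v} C] [Groupoid.{v} D] :
    Groupoid (C ⊕ D) where
  inv {X Y} f :=
    match X, Y, f with
    | Sum.inl _, Sum.inl _, f => ULift.up (Groupoid.inv f.down)
    | Sum.inr _, Sum.inr _, f => ULift.up (Groupoid.inv f.down)
  inv_comp {X Y} f := by
    cases X <;> cases Y <;> first | exact f.elim | exact congrArg ULift.up (Groupoid.inv_comp f.down)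
  comp_inv {X Y} f := by
    cases X <;> cases Y <;> first | exact f.elim | exact congrArg ULift.up (Groupoid.comp_inv f.down)

/-!
A groupoid with a single isomorphism class is equivalent to the one-object groupoid of the
automorphism group `Γ` of any of its objects. That one is covered with `#Γ` sheets by the action
groupoid of `Γ` on itself, which is equivalent to the point, so the axioms force the value
`1 / #Γ`. Additivity then gives `μ = χ` on every full subgroupoid spanned by finitely many
classes, hence on `G` when it has finitely many classes. Otherwise an enumeration of the classes
by `ℕ` is a filtration whose terms have as values the partial sums of `χ(G)`, and continuity
along it concludes.
-/

open Filter Topology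

universe u v u' v'

section IsoClasses

variable {C : Type u} [Category.{v} C] {D : Type u'} [Category.{v'} D]

noncomputable def autWeight (c : Quotient (isIsomorphicSetoid C)) : ℝ :=
  1 / Nat.card (Aut c.out)

lemma autWeight_mk (x : C) :
    autWeight (Quotient.mk (isIsomorphicSetoid C) x) = 1 / Nat.card (Aut x) := by
  obtain ⟨i⟩ := Quotient.exact (Quotient.out_eq (Quotient.mk (isIsomorphicSetoid C) x))
  rw [autWeight, Nat.card_congr (Aut.autMulEquivOfIso i).toEquiv]

def isoClassMap (F : C ⥤ D) :
    Quotient (isIsomorphicSetoid C) → Quotient (isIsomorphicSetoid D) :=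
  Quotient.map F.obj fun _ _ ⟨i⟩ => ⟨F.mapIso i⟩

lemma isoClassMap_injective {F : C ⥤ D} (hF : F.FullyFaithful) :
    Function.Injective (isoClassMap F) := by
  rintro ⟨x⟩ ⟨y⟩ h
  obtain ⟨i⟩ := Quotient.exact h
  exact Quotient.sound ⟨hF.preimageIso i⟩

lemma autWeight_isoClassMap {F : C ⥤ D} (hF : F.FullyFaithful)
    (c : Quotient (isIsomorphicSetoid C)) : autWeight (isoClassMap F c) = autWeight c := by
  induction c using Quotient.inductionOn with
  | h x => rw [isoClassMap, Quotient.map_mk, autWeight_mk, autWeight_mk,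
      Nat.card_congr (hF.autMulEquivOfFullyFaithful x).toEquiv]

lemma Tame.of_fullyFaithful {F : C ⥤ D} (hF : F.FullyFaithful) (hD : Tame D) : Tame C := by
  obtain ⟨_, _, hsum⟩ := hD
  refine ⟨(isoClassMap_injective hF).countable, fun x => ?_, ?_⟩
  · exact Finite.of_equiv _ (hF.autMulEquivOfFullyFaithful x).symm.toEquiv
  · have hsum : Summable (autWeight (C := D)) := hsum
    exact (hsum.comp_injective (isoClassMap_injective hF)).congr (autWeight_isoClassMap hF)

lemma Tame.of_finite [Finite C] (h : ∀ x : C, Finite (x ⟶ x)) : Tame C :=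
  ⟨inferInstance, fun x => Finite.of_injective (fun i : Aut x => i.hom) fun _ _ h => Iso.ext h,
    Summable.of_finite⟩

def isoClassProp (s : Set (Quotient (isIsomorphicSetoid C))) : ObjectProperty C :=
  fun x => Quotient.mk _ x ∈ s

lemma Tame.fullSubcategory (hC : Tame C) (P : ObjectProperty C) : Tame P.FullSubcategory :=
  hC.of_fullyFaithful P.fullyFaithfulι

end IsoClasses

namespace CategoryTheory.Functor

variable {A B C : Type*} [Category A] [Category B] [Category C] (F : A ⥤ C) (G : B ⥤ C)

instance faithful_sum' [F.Faithful] [G.Faithful] : (F.sum' G).Faithful where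
  map_injective {X Y} f g h := by
    match X, Y, f, g with
    | .inl _, .inl _, f, g => exact ULift.ext _ _ (F.map_injective h)
    | .inr _, .inr _, f, g => exact ULift.ext _ _ (G.map_injective h)

lemma full_sum' [F.Full] [G.Full] (hFG : ∀ a b, IsEmpty (F.obj a ⟶ G.obj b))
    (hGF : ∀ b a, IsEmpty (G.obj b ⟶ F.obj a)) : (F.sum' G).Full where
  map_surjective {X Y} f := by
    match X, Y with
    | .inl a, .inl a' => exact ⟨ULift.up (F.preimage f), F.map_preimage f⟩
    | .inr b, .inr b' => exact ⟨ULift.up (G.preimage f), G.map_preimage f⟩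
    | .inl a, .inr b => exact (hFG a b).elim f
    | .inr b, .inl a => exact (hGF b a).elim f

end CategoryTheory.Functor

section Groupoid

variable {G : Type u} [Groupoid.{v} G]

noncomputable def CategoryTheory.Groupoid.singleObjAutEquivalence (x : G)
    (hx : ∀ y : G, Nonempty (x ≅ y)) : SingleObj (Aut x) ≌ G :=
  have : (SingleObj.functor (Aut.toEnd x)).Full :=
    ⟨fun f => ⟨Groupoid.isoEquivHom x x |>.symm f, rfl⟩⟩
  have : (SingleObj.functor (Aut.toEnd x)).Faithful := ⟨fun h => Iso.ext h⟩
  have : (SingleObj.functor (Aut.toEnd x)).EssSurj := ⟨fun y => ⟨SingleObj.star _, hx y⟩⟩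
  have : (SingleObj.functor (Aut.toEnd x)).IsEquivalence := { }
  (SingleObj.functor (Aut.toEnd x)).asEquivalence

variable {s t : Set (Quotient (isIsomorphicSetoid G))}

lemma isEmpty_hom_of_disjoint (hst : Disjoint s t) {x y : G} (hx : isoClassProp s x)
    (hy : isoClassProp t y) : IsEmpty (x ⟶ y) :=
  ⟨fun f => hst.ne_of_mem hx hy (Quotient.sound ⟨Groupoid.isoEquivHom x y |>.symm f⟩)⟩

noncomputable def isoClassPropUnionEquivalence (hst : Disjoint s t) :
    (isoClassProp s).FullSubcategory ⊕ (isoClassProp t).FullSubcategory ≌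
      (isoClassProp (s ∪ t)).FullSubcategory :=
  have hs : isoClassProp s ≤ isoClassProp (s ∪ t) := fun _ => Or.inl
  have ht : isoClassProp t ≤ isoClassProp (s ∪ t) := fun _ => Or.inr
  have := (ObjectProperty.ιOfLE hs).full_sum' (ObjectProperty.ιOfLE ht)
    (fun a b => ⟨fun f => (isEmpty_hom_of_disjoint hst a.2 b.2).false f.hom⟩)
    (fun b a => ⟨fun f => (isEmpty_hom_of_disjoint hst.symm b.2 a.2).false f.hom⟩)
  have : ((ObjectProperty.ιOfLE hs).sum' (ObjectProperty.ιOfLE ht)).EssSurj := ⟨fun x =>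
    x.2.elim (fun hx => ⟨.inl ⟨x.obj, hx⟩, ⟨Iso.refl _⟩⟩)
      (fun hx => ⟨.inr ⟨x.obj, hx⟩, ⟨Iso.refl _⟩⟩)⟩
  have : ((ObjectProperty.ιOfLE hs).sum' (ObjectProperty.ιOfLE ht)).IsEquivalence := { }
  ((ObjectProperty.ιOfLE hs).sum' (ObjectProperty.ιOfLE ht)).asEquivalence

end Groupoid

namespace CategoryTheory.ActionCategory

variable (Γ : Type u) [Group Γ]

lemma isSheetedCovering_π (X : Type u) [MulAction Γ X] [Nonempty X] :
    IsSheetedCovering (π Γ X) (Nat.card X) := by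
  refine ⟨fun _ => ⟨objEquiv Γ X (Classical.arbitrary X), Subsingleton.elim _ _⟩, ?_,
    fun _ => ?_⟩
  · rintro _ _ f ⟨⟨⟩, x⟩ -
    refine ⟨⟨⟨.star Γ, show X from (show Γ from f) • (show X from x)⟩, ⟨f, rfl⟩⟩,
      ⟨Subsingleton.elim _ _, HEq.rfl⟩, ?_⟩
    rintro ⟨⟨⟨⟩, y⟩, φ, hy⟩ ⟨-, hφ⟩
    obtain rfl : (show Γ from φ) = show Γ from f := eq_of_heq hφ
    clear hφ
    -- Retyped as a bare group element, `φ` no longer depends on `y`, so `y` can be substituted.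
    change Γ at φ
    change φ • (show X from x) = y at hy
    subst hy
    rfl
  · rw [Nat.card_congr (Equiv.subtypeUnivEquiv fun _ => Subsingleton.elim _ _),
      Nat.card_congr (objEquiv Γ X).symm]

instance (x y : ActionCategory Γ Γ) : Unique (x ⟶ y) where
  default := ⟨y.back * x.back⁻¹, inv_mul_cancel_right y.back x.back⟩
  uniq f := Subtype.ext (eq_mul_inv_of_mul_eq f.2)

lemma nonempty_equivalence_punit : Nonempty (ActionCategory Γ Γ ≌ Discrete PUnit.{1}) :=
  (equiv_punit_iff_unique _).2 ⟨inferInstance, fun _ _ => ⟨inferInstance⟩⟩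

end CategoryTheory.ActionCategory

section Axioms

variable (μ : (G : Type) → [Groupoid.{0} G] → ℝ)

def EquivalenceInvariant : Prop :=
  ∀ (G : Type) [Groupoid.{0} G] (H : Type) [Groupoid.{0} H],
    Tame G → Tame H → (G ≌ H) → μ G = μ H

def CoveringMultiplicative : Prop :=
  ∀ (G : Type) [Groupoid.{0} G] (H : Type) [Groupoid.{0} H] (F : G ⥤ H) (k : ℕ),
    Tame G → Tame H → IsSheetedCovering F k → μ G = k * μ H

def SumAdditive : Prop :=
  ∀ (G : Type) [Groupoid.{0} G] (H : Type) [Groupoid.{0} H],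
    Tame G → Tame H → μ (G ⊕ H) = μ G + μ H

variable {μ}

lemma CoveringMultiplicative.eq_zero_of_isEmpty (hcov : CoveringMultiplicative μ) (G : Type)
    [Groupoid.{0} G] [IsEmpty G] : μ G = 0 := by
  have hG : Tame G := Tame.of_finite isEmptyElim
  -- An empty groupoid is a covering of itself with any number of sheets, in particular zero.
  simpa using hcov G G (𝟭 G) 0 hG hG ⟨Function.surjective_id, isEmptyElim, isEmptyElim⟩

lemma mu_singleObj_s10 (hequiv : EquivalenceInvariant μ) (hpt : μ (Discrete PUnit) = 1)
    (hcov : CoveringMultiplicative μ) (Γ : Type) [Group Γ] [Finite Γ] :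
    μ (SingleObj Γ) = 1 / Nat.card Γ := by
  have : Finite (ActionCategory Γ Γ) := Finite.of_equiv _ (ActionCategory.objEquiv Γ Γ)
  have hΓ : Tame (ActionCategory Γ Γ) := Tame.of_finite fun _ => Finite.of_subsingleton
  have hpoint : Tame (Discrete PUnit) := Tame.of_finite fun _ => Finite.of_subsingleton
  obtain ⟨e⟩ := ActionCategory.nonempty_equivalence_punit Γ
  have hcover := hcov _ _ _ _ hΓ (Tame.of_finite fun _ => inferInstanceAs (Finite Γ))
    (ActionCategory.isSheetedCovering_π Γ Γ)
  rw [hequiv _ _ hΓ hpoint e, hpt] at hcover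
  rw [eq_div_iff (Nat.cast_ne_zero.2 Nat.card_pos.ne'), mul_comm, hcover]

lemma mu_isoClassProp_singleton (hequiv : EquivalenceInvariant μ) (hpt : μ (Discrete PUnit) = 1)
    (hcov : CoveringMultiplicative μ) {G : Type} [Groupoid.{0} G] (hG : Tame G)
    (c : Quotient (isIsomorphicSetoid G)) :
    μ (isoClassProp {c}).FullSubcategory = autWeight c := by
  let x : (isoClassProp {c}).FullSubcategory := ⟨c.out, Quotient.out_eq c⟩
  have hx : ∀ y, Nonempty (x ≅ y) := fun y =>
    ⟨(isoClassProp {c}).fullyFaithfulι.preimageIso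
      (Quotient.exact ((Quotient.out_eq c).trans y.2.symm)).some⟩
  have hsub := hG.fullSubcategory (isoClassProp {c})
  have := hsub.2.1 x
  rw [← hequiv _ _ (Tame.of_finite fun _ => inferInstanceAs (Finite (Aut x))) hsub
    (Groupoid.singleObjAutEquivalence x hx), mu_singleObj_s10 hequiv hpt hcov,
    Nat.card_congr ((isoClassProp {c}).fullyFaithfulι.autMulEquivOfFullyFaithful x).toEquiv,
    ← autWeight_mk]
  exact congrArg autWeight (Quotient.out_eq c)

lemma mu_isoClassProp_eq_tsum (hequiv : EquivalenceInvariant μ) (hpt : μ (Discrete PUnit) = 1)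
    (hcov : CoveringMultiplicative μ) (hadd : SumAdditive μ) {G : Type} [Groupoid.{0} G]
    (hG : Tame G) {s : Set (Quotient (isIsomorphicSetoid G))} (hs : s.Finite) :
    μ (isoClassProp s).FullSubcategory =
      ∑' c : s, autWeight (c : Quotient (isIsomorphicSetoid G)) := by
  induction s, hs using Set.Finite.induction_on with
  | empty =>
    have : IsEmpty (isoClassProp (∅ : Set (Quotient (isIsomorphicSetoid G)))).FullSubcategory :=
      ⟨fun x => x.2⟩
    rw [hcov.eq_zero_of_isEmpty, tsum_empty]
  | @insert c s hc hs ih =>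
    have hdisj : Disjoint {c} s := Set.disjoint_singleton_left.2 hc
    have hunion := (hG.fullSubcategory _).of_fullyFaithful
      (isoClassPropUnionEquivalence hdisj).fullyFaithfulFunctor
    rw [Set.insert_eq,
      ← hequiv _ _ hunion (hG.fullSubcategory _) (isoClassPropUnionEquivalence hdisj),
      hadd _ _ (hG.fullSubcategory _) (hG.fullSubcategory _), ih,
      mu_isoClassProp_singleton hequiv hpt hcov hG, Summable.tsum_union_disjoint hdisj
      Summable.of_finite (hs.summable _), tsum_singleton]

end Axioms

lemma tendsto_tsum_setOf_le {β : Type*} (f : β → ℕ) {w : β → ℝ} (hw : Summable w) :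
    Tendsto (fun n => ∑' b : {b | f b ≤ n}, w b) atTop (𝓝 (∑' b, w b)) := by
  simp_rw [tsum_subtype]
  refine tendsto_tsum_of_dominated_convergence hw.norm (fun b => tendsto_const_nhds.congr' ?_)
    (Eventually.of_forall fun n b => norm_indicator_le_norm_self _ _)
  filter_upwards [eventually_ge_atTop (f b)] with n hn using
    (Set.indicator_of_mem (s := {b | f b ≤ n}) hn w).symm

open Filter Topology in
/-- Uniqueness of groupoid cardinality: a real-valued function on tame groupoids that is
invariant under equivalence, normalized on the point, compatible with `k`-sheeted
coverings, additive over binary disjoint unions, and continuous with respect to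
filtrations, coincides with the groupoid cardinality `χ`. -/
theorem mu_eq_chi (μ : (G : Type) → [Groupoid.{0} G] → ℝ)
    (h_equiv : ∀ (G : Type) [Groupoid.{0} G] (H : Type) [Groupoid.{0} H],
      Tame G → Tame H → (G ≌ H) → μ G = μ H)
    (h_pt : μ (Discrete PUnit) = 1)
    (h_cov : ∀ (G : Type) [Groupoid.{0} G] (H : Type) [Groupoid.{0} H]
      (F : G ⥤ H) (k : ℕ), Tame G → Tame H → IsSheetedCovering F k → μ G = k * μ H)
    (h_add : ∀ (G : Type) [Groupoid.{0} G] (H : Type) [Groupoid.{0} H],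
      Tame G → Tame H → μ (G ⊕ H) = μ G + μ H)
    (h_filt : ∀ (G : Type) [Groupoid.{0} G], Tame G →
      ∀ f : Quotient (isIsomorphicSetoid G) → ℕ, Function.Surjective f →
        Tendsto (fun n : ℕ =>
            μ (ObjectProperty.FullSubcategory fun x : G => f (Quotient.mk (isIsomorphicSetoid G) x) ≤ n))
          atTop (𝓝 (μ G)))
    (G : Type) [Groupoid.{0} G] (hG : Tame G) : μ G = chi G := by
  have hfinite {s : Set (Quotient (isIsomorphicSetoid G))} (hs : s.Finite) :=
    mu_isoClassProp_eq_tsum h_equiv h_pt h_cov h_add hG hs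
  rcases finite_or_infinite (Quotient (isIsomorphicSetoid G)) with hfin | hinf
  · calc μ G = μ (isoClassProp (C := G) Set.univ).FullSubcategory :=
          h_equiv _ _ hG (hG.fullSubcategory _) (ObjectProperty.topEquivalence G).symm
      _ = chi G := (hfinite Set.finite_univ).trans (tsum_univ _)
  · have : Countable (Quotient (isIsomorphicSetoid G)) := hG.1
    obtain ⟨e⟩ : Nonempty (Quotient (isIsomorphicSetoid G) ≃ ℕ) :=
      nonempty_equiv_of_countable
    refine tendsto_nhds_unique (h_filt G hG e e.surjective) ?_
    -- The `n`-th term of the filtration is, by definition, `isoClassProp (e ⁻¹' Set.Iic n)`.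
    exact (tendsto_tsum_setOf_le e hG.2.2).congr fun n =>
      (hfinite ((Set.finite_Iic n).preimage e.injective.injOn)).symm
end

section
/- If μ is a real-valued function on tame groupoids that is invariant under equivalence, takes value 1 on the trivial groupoid, and satisfies μ(G) = k·μ(H) for k-sheeted coverings G → H, then μ(BG) = 1/#G for every finite group G. -/
open CategoryTheory

/-- The "universal cover" `EG`: the codiscrete groupoid on the set `G`. -/
def EGpd (G : Type) := G

/-- Identity coercion from `EGpd G` to `G`. -/
def EGpd.toG {G : Type} (a : EGpd G) : G := a

instance (G : Type) : Groupoid (EGpd G) where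
  Hom _ _ := Unit
  id _ := ()
  comp _ _ := ()
  inv _ := ()

instance (G : Type) (a b : EGpd G) : Subsingleton (a ⟶ b) :=
  inferInstanceAs (Subsingleton Unit)

instance (G : Type) (a b : EGpd G) : Finite (a ⟶ b) :=
  inferInstanceAs (Finite Unit)

instance (G : Type) [Finite G] : Finite (EGpd G) := ‹Finite G›

instance (M : Type) : Finite (SingleObj M) := inferInstanceAs (Finite PUnit.{1})

instance (M : Type) [Finite M] (x y : SingleObj M) : Finite (x ⟶ y) := ‹Finite M›

instance (x y : Discrete PUnit) : Finite (x ⟶ y) :=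
  Finite.of_injective (fun _ => PUnit.unit) (fun a b _ => Subsingleton.elim a b)

/-- A finite groupoid is tame. -/
theorem tame_of_finite (C : Type) [Groupoid.{0} C] [Finite C]
    [∀ x y : C, Finite (x ⟶ y)] : Tame C := by
  refine ⟨inferInstance, fun x => ?_, Summable.of_finite⟩
  exact Finite.of_injective (fun i : Aut x => (i.hom, i.inv))
    (fun a b h => Iso.ext (congrArg Prod.fst h))

/-- The covering functor `EG ⥤ BG`. -/
def EGfunctor (G : Type) [Group G] : EGpd G ⥤ SingleObj G where
  obj _ := SingleObj.star G
  map {a b} _ := b.toG * a.toG⁻¹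
  map_id a := by
    show a.toG * a.toG⁻¹ = 𝟙 (SingleObj.star G)
    rw [SingleObj.id_as_one, mul_inv_cancel]
  map_comp {a b c} f g := by
    show c.toG * a.toG⁻¹ = (c.toG * b.toG⁻¹) * (b.toG * a.toG⁻¹)
    group

/-- `EG` is equivalent to the trivial groupoid. -/
def EGequiv (G : Type) [Group G] : EGpd G ≌ Discrete PUnit :=
  CategoryTheory.Equivalence.mk
    { obj := fun _ => ⟨⟨⟩⟩, map := fun _ => 𝟙 _ }
    { obj := fun _ => (show EGpd G from (1 : G)), map := fun _ => (), map_id := fun _ => rfl, map_comp := fun _ _ => rfl }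
    (NatIso.ofComponents (fun a => ⟨(), (), rfl, rfl⟩)
      (fun _ => Subsingleton.elim _ _))
    (NatIso.ofComponents (fun a => Iso.refl _)
      (fun _ => Subsingleton.elim _ _))

theorem EGcovering (G : Type) [Group G] :
    IsSheetedCovering (EGfunctor G) (Nat.card G) := by
  refine ⟨fun h => ⟨(show EGpd G from (1 : G)), Subsingleton.elim _ _⟩, ?_, ?_⟩
  · rintro ⟨⟩ ⟨⟩ f g₁ -
    refine ⟨⟨show EGpd G from f * g₁.toG, ()⟩, ⟨rfl, heq_of_eq ?_⟩, ?_⟩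
    · show (f * g₁.toG) * g₁.toG⁻¹ = f
      rw [mul_inv_cancel_right]
    · rintro ⟨g₂, ⟨⟩⟩ ⟨-, hmap⟩
      have h1 : g₂.toG * g₁.toG⁻¹ = f := eq_of_heq hmap
      have h2 : g₂ = (show EGpd G from f * g₁.toG) := by
        show g₂.toG = f * g₁.toG
        rw [← h1, inv_mul_cancel_right]
      exact Sigma.ext h2 (by subst h2; rfl)
  · intro h
    refine Eq.symm (Nat.card_congr ?_)
    exact (Equiv.subtypeUnivEquiv (fun g => Subsingleton.elim _ _)).symm

/-- A real-valued function on tame groupoids that is invariant under equivalence, takes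
value `1` on the trivial groupoid, and satisfies `μ(G) = k·μ(H)` for `k`-sheeted
coverings takes the value `1/#G` on `BG` for every finite group `G`. -/
theorem mu_singleObj (μ : (G : Type) → [Groupoid.{0} G] → ℝ)
    (h_equiv : ∀ (G : Type) [Groupoid.{0} G] (H : Type) [Groupoid.{0} H],
      Tame G → Tame H → (G ≌ H) → μ G = μ H)
    (h_pt : μ (Discrete PUnit) = 1)
    (h_cov : ∀ (G : Type) [Groupoid.{0} G] (H : Type) [Groupoid.{0} H]
      (F : G ⥤ H) (k : ℕ), Tame G → Tame H → IsSheetedCovering F k → μ G = k * μ H)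
    (G : Type) [Group G] [Finite G] : μ (SingleObj G) = 1 / Nat.card G := by
  have hfinE : Finite (EGpd G) := ‹Finite G›
  have htE : Tame (EGpd G) := tame_of_finite _
  have htB : Tame (SingleObj G) := tame_of_finite _
  have htP : Tame (Discrete PUnit) := tame_of_finite _
  have h1 : μ (EGpd G) = 1 := by
    rw [h_equiv (EGpd G) (Discrete PUnit) htE htP (EGequiv G), h_pt]
  have h2 : μ (EGpd G) = (Nat.card G) * μ (SingleObj G) :=
    h_cov _ _ (EGfunctor G) (Nat.card G) htE htB (EGcovering G)
  have hcard : (Nat.card G : ℝ) ≠ 0 := by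
    exact_mod_cast Nat.card_ne_zero.mpr ⟨⟨1⟩, ‹Finite G›⟩
  field_simp
  rw [mul_comm, ← h2, h1]
end

section
/- The generating series of a partitional product of relatively tame stuff types is the Cauchy product of the generating series: (G·H)(z) = G(z)·H(z) as formal power series. -/
open CategoryTheory

/-- The degree (number of elements) of an object of the groupoid of bijections between
finite sets. -/
noncomputable def deg (S : Core FintypeCat) : ℕ :=
  Nat.card ((Core.inclusion FintypeCat).obj S)

/-! Iso classes of `(G × H)ₙ` are pairs of iso classes of `Gᵢ` and `Hⱼ` with `i + j = n`, and
the automorphism group of a pair is the product of the automorphism groups. So the terms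
`1 / #Aut` of `χ((G × H)ₙ)` are the products of those of `χ(Gᵢ)` and `χ(Hⱼ)`, and the sum over the
finitely many `(i, j)` of products of convergent series of nonnegative terms is the `n`-th
coefficient of the Cauchy product. -/

section GradedSums

open Finset

variable {α β : Type*} (d : α → ℕ) (e : β → ℕ)

def addFiberEquivSigmaAntidiagonal (n : ℕ) :
    {r : α × β // d r.1 + e r.2 = n} ≃
      Σ p : antidiagonal n, {a // d a = p.1.1} × {b // e b = p.1.2} where
  toFun r := ⟨⟨(d r.1.1, e r.1.2), mem_antidiagonal.2 r.2⟩, ⟨r.1.1, rfl⟩, ⟨r.1.2, rfl⟩⟩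
  invFun t := ⟨(t.2.1, t.2.2), by rw [t.2.1.2, t.2.2.2]; exact mem_antidiagonal.1 t.1.2⟩
  left_inv _ := rfl
  right_inv := by
    rintro ⟨⟨⟨i, j⟩, h⟩, ⟨a, ha : d a = i⟩, ⟨b, hb : e b = j⟩⟩
    subst ha hb
    rfl

theorem tsum_add_fiber_eq_sum_antidiagonal {u : α → ℝ} {v : β → ℝ} (hu₀ : 0 ≤ u) (hv₀ : 0 ≤ v)
    (hu : ∀ i, Summable fun a : {a // d a = i} => u a)
    (hv : ∀ j, Summable fun b : {b // e b = j} => v b) (n : ℕ) :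
    ∑' r : {r : α × β // d r.1 + e r.2 = n}, u r.1.1 * v r.1.2 =
      ∑ p ∈ antidiagonal n,
        (∑' a : {a // d a = p.1}, u a) * ∑' b : {b // e b = p.2}, v b := by
  have hfiber (p : antidiagonal n) :
      Summable fun ab : {a // d a = p.1.1} × {b // e b = p.1.2} => u ab.1 * v ab.2 :=
    (hu p.1.1).mul_of_nonneg (hv p.1.2) (fun a => hu₀ a) (fun b => hv₀ b)
  have hsigma : Summable fun t : Σ p : antidiagonal n, {a // d a = p.1.1} × {b // e b = p.1.2} =>
      u t.2.1 * v t.2.2 :=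
    (summable_sigma_of_nonneg fun t => mul_nonneg (hu₀ _) (hv₀ _)).2 ⟨hfiber, .of_finite⟩
  calc _ = ∑' t : Σ p : antidiagonal n, {a // d a = p.1.1} × {b // e b = p.1.2},
          u t.2.1 * v t.2.2 :=
        ((addFiberEquivSigmaAntidiagonal d e n).symm.tsum_eq fun r => u r.1.1 * v r.1.2).symm
    _ = ∑ p : antidiagonal n, ∑' ab : {a // d a = p.1.1} × {b // e b = p.1.2}, u ab.1 * v ab.2 := by
        rw [hsigma.tsum_sigma' hfiber, tsum_fintype]
    _ = ∑ p : antidiagonal n, (∑' a : {a // d a = p.1.1}, u a) * ∑' b : {b // e b = p.1.2}, v b :=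
        sum_congr rfl fun p _ => ((hu p.1.1).tsum_mul_tsum (hv p.1.2) (hfiber p)).symm
    _ = _ := sum_coe_sort (antidiagonal n) fun p =>
        (∑' a : {a // d a = p.1}, u a) * ∑' b : {b // e b = p.2}, v b

end GradedSums

section IsoClasses

open Finset

variable {C D : Type*} [Category C] [Category D]

noncomputable def invCardAut (x : C) : ℝ :=
  1 / Nat.card (Aut x)

lemma invCardAut_nonneg (x : C) : 0 ≤ invCardAut x := by
  unfold invCardAut
  positivity

lemma invCardAut_congr {x y : C} (e : x ≅ y) : invCardAut x = invCardAut y := by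
  rw [invCardAut, invCardAut, Nat.card_congr (Aut.autMulEquivOfIso e).toEquiv]

lemma invCardAut_out_mk (x : C) :
    invCardAut (⟦x⟧ : Quotient (isIsomorphicSetoid C)).out = invCardAut x :=
  invCardAut_congr (fromSkeletonToSkeletonIso x)

lemma invCardAut_fullSubcategory {P : ObjectProperty C} (x : P.FullSubcategory) :
    invCardAut x = invCardAut x.obj := by
  rw [invCardAut, invCardAut,
    Nat.card_congr (α := Aut x) (β := Aut x.obj) P.fullyFaithfulι.isoEquiv]

def autProdEquiv (x : C) (y : D) : Aut ((x, y) : C × D) ≃ Aut x × Aut y where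
  toFun e := ((CategoryTheory.Prod.fst C D).mapIso e, (CategoryTheory.Prod.snd C D).mapIso e)
  invFun e := e.1.prod e.2
  left_inv _ := rfl
  right_inv _ := rfl

lemma invCardAut_prod (x : C) (y : D) :
    invCardAut ((x, y) : C × D) = invCardAut x * invCardAut y := by
  rw [invCardAut, Nat.card_congr (autProdEquiv x y), Nat.card_prod, Nat.cast_mul,
    ← one_div_mul_one_div]
  rfl

noncomputable def isoClassesFullSubcategoryEquiv (P : ObjectProperty C)
    (R : Quotient (isIsomorphicSetoid C) → Prop) (hR : ∀ x, P x ↔ R ⟦x⟧) :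
    Quotient (isIsomorphicSetoid P.FullSubcategory) ≃ {q // R q} where
  toFun := Quotient.lift (fun x => ⟨⟦x.obj⟧, (hR _).1 x.property⟩) fun _ _ ⟨e⟩ =>
    Subtype.ext (Quotient.sound ⟨P.ι.mapIso e⟩)
  invFun q := ⟦⟨q.1.out, (hR _).2 (by rw [Quotient.out_eq]; exact q.2)⟩⟧
  left_inv := Quotient.ind fun x =>
    Quotient.sound ⟨P.fullyFaithfulι.preimageIso (fromSkeletonToSkeletonIso x.obj)⟩
  right_inv q := Subtype.ext q.1.out_eq

lemma isoClassesFullSubcategoryEquiv_mk (P : ObjectProperty C)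
    (R : Quotient (isIsomorphicSetoid C) → Prop) (hR : ∀ x, P x ↔ R ⟦x⟧) (x : P.FullSubcategory) :
    (isoClassesFullSubcategoryEquiv P R hR ⟦x⟧).1 = ⟦x.obj⟧ :=
  rfl

lemma invCardAut_out_isoClassesFullSubcategoryEquiv (P : ObjectProperty C)
    (R : Quotient (isIsomorphicSetoid C) → Prop) (hR : ∀ x, P x ↔ R ⟦x⟧)
    (q : Quotient (isIsomorphicSetoid P.FullSubcategory)) :
    invCardAut (isoClassesFullSubcategoryEquiv P R hR q).1.out = invCardAut q.out := by
  induction q using Quotient.ind with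
  | _ x =>
    rw [isoClassesFullSubcategoryEquiv_mk, invCardAut_out_mk, invCardAut_out_mk,
      invCardAut_fullSubcategory]

lemma chi_fullSubcategory_eq_tsum (P : ObjectProperty C)
    (R : Quotient (isIsomorphicSetoid C) → Prop) (hR : ∀ x, P x ↔ R ⟦x⟧) :
    chi P.FullSubcategory = ∑' q : {q // R q}, invCardAut q.1.out :=
  (tsum_congr fun q => (invCardAut_out_isoClassesFullSubcategoryEquiv P R hR q).symm).trans
    ((isoClassesFullSubcategoryEquiv P R hR).tsum_eq fun q => invCardAut q.1.out)

lemma summable_invCardAut_fullSubcategory_iff (P : ObjectProperty C)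
    (R : Quotient (isIsomorphicSetoid C) → Prop) (hR : ∀ x, P x ↔ R ⟦x⟧) :
    (Summable fun q : Quotient (isIsomorphicSetoid P.FullSubcategory) => invCardAut q.out) ↔
      Summable fun q : {q // R q} => invCardAut q.1.out := by
  rw [← (isoClassesFullSubcategoryEquiv P R hR).summable_iff]
  simp only [Function.comp_def, invCardAut_out_isoClassesFullSubcategoryEquiv]

noncomputable def isoClassesProdEquiv :
    Quotient (isIsomorphicSetoid (C × D)) ≃
      Quotient (isIsomorphicSetoid C) × Quotient (isIsomorphicSetoid D) where
  toFun := Quotient.lift (fun p => (⟦p.1⟧, ⟦p.2⟧)) fun _ _ ⟨e⟩ =>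
    Prod.ext (Quotient.sound ⟨(CategoryTheory.Prod.fst C D).mapIso e⟩)
      (Quotient.sound ⟨(CategoryTheory.Prod.snd C D).mapIso e⟩)
  invFun r := Quotient.lift₂ (s₁ := isIsomorphicSetoid C) (s₂ := isIsomorphicSetoid D)
    (fun x y => ⟦(x, y)⟧)
    (fun _ _ _ _ ⟨e⟩ ⟨f⟩ => Quotient.sound ⟨e.prod f⟩) r.1 r.2
  left_inv := Quotient.ind fun _ => rfl
  right_inv := fun ⟨a, b⟩ => Quotient.inductionOn₂ a b fun _ _ => rfl

lemma isoClassesProdEquiv_mk (p : C × D) : isoClassesProdEquiv ⟦p⟧ = (⟦p.1⟧, ⟦p.2⟧) :=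
  rfl

lemma invCardAut_out_eq_mul (q : Quotient (isIsomorphicSetoid (C × D))) :
    invCardAut q.out =
      invCardAut (isoClassesProdEquiv q).1.out * invCardAut (isoClassesProdEquiv q).2.out := by
  induction q using Quotient.ind with
  | _ p =>
    rw [isoClassesProdEquiv_mk, invCardAut_out_mk, invCardAut_out_mk, invCardAut_out_mk]
    exact invCardAut_prod p.1 p.2

lemma tsum_invCardAut_prod
    (R : Quotient (isIsomorphicSetoid C) × Quotient (isIsomorphicSetoid D) → Prop) :
    ∑' q : {q // R (isoClassesProdEquiv q)}, invCardAut q.1.out =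
      ∑' r : {r // R r}, invCardAut r.1.1.out * invCardAut r.1.2.out := by
  rw [← (Equiv.subtypeEquivOfSubtype isoClassesProdEquiv).tsum_eq]
  exact tsum_congr fun q => invCardAut_out_eq_mul q.1

theorem chi_prod_grade_eq_sum_antidiagonal (dC : C → ℕ) (dD : D → ℕ)
    (hdC : ∀ ⦃x y : C⦄, (x ≅ y) → dC x = dC y) (hdD : ∀ ⦃x y : D⦄, (x ≅ y) → dD x = dD y)
    (hC : ∀ i, Summable fun q : Quotient (isIsomorphicSetoid
      (ObjectProperty.FullSubcategory fun x => dC x = i)) => invCardAut q.out)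
    (hD : ∀ j, Summable fun q : Quotient (isIsomorphicSetoid
      (ObjectProperty.FullSubcategory fun y => dD y = j)) => invCardAut q.out) (n : ℕ) :
    chi (ObjectProperty.FullSubcategory fun p : C × D => dC p.1 + dD p.2 = n) =
      ∑ p ∈ antidiagonal n, chi (ObjectProperty.FullSubcategory fun x => dC x = p.1) *
        chi (ObjectProperty.FullSubcategory fun y => dD y = p.2) := by
  let gC : Quotient (isIsomorphicSetoid C) → ℕ := Quotient.lift dC fun _ _ ⟨e⟩ => hdC e
  let gD : Quotient (isIsomorphicSetoid D) → ℕ := Quotient.lift dD fun _ _ ⟨e⟩ => hdD e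
  have hchi (p : ℕ × ℕ) : chi (ObjectProperty.FullSubcategory fun x => dC x = p.1) *
      chi (ObjectProperty.FullSubcategory fun y => dD y = p.2) =
        (∑' a : {a // gC a = p.1}, invCardAut a.1.out) *
          ∑' b : {b // gD b = p.2}, invCardAut b.1.out :=
    congrArg₂ (· * ·) (chi_fullSubcategory_eq_tsum _ _ fun _ => Iff.rfl)
      (chi_fullSubcategory_eq_tsum _ _ fun _ => Iff.rfl)
  calc _ = ∑' q : {q // gC (isoClassesProdEquiv q).1 + gD (isoClassesProdEquiv q).2 = n},
          invCardAut q.1.out := chi_fullSubcategory_eq_tsum _ _ fun _ => Iff.rfl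
    _ = ∑' r : {r : _ × _ // gC r.1 + gD r.2 = n}, invCardAut r.1.1.out * invCardAut r.1.2.out :=
        tsum_invCardAut_prod fun r => gC r.1 + gD r.2 = n
    _ = ∑ p ∈ antidiagonal n, (∑' a : {a // gC a = p.1}, invCardAut a.1.out) *
          ∑' b : {b // gD b = p.2}, invCardAut b.1.out :=
        tsum_add_fiber_eq_sum_antidiagonal gC gD (fun _ => invCardAut_nonneg _)
          (fun _ => invCardAut_nonneg _)
          (fun i => (summable_invCardAut_fullSubcategory_iff _ _ fun _ => Iff.rfl).1 (hC i))
          (fun j => (summable_invCardAut_fullSubcategory_iff _ _ fun _ => Iff.rfl).1 (hD j)) n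
    _ = _ := (sum_congr rfl fun p _ => hchi p).symm

end IsoClasses

lemma deg_eq_of_iso {S T : Core FintypeCat} (e : S ≅ T) : deg S = deg T :=
  Nat.card_congr (FintypeCat.equivEquivIso.symm ((Core.inclusion FintypeCat).mapIso e))

/-- The generating series of a partitional product of relatively tame stuff types is the
Cauchy product of the generating series. -/
theorem generatingSeries_partitionalProduct
    {G : Type u} [Groupoid.{v} G] {H : Type u₂} [Groupoid.{v₂} H]
    (X : G ⥤ Core FintypeCat) (Y : H ⥤ Core FintypeCat)
    (hG : ∀ n : ℕ, Tame (ObjectProperty.FullSubcategory fun g : G => deg (X.obj g) = n))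
    (hH : ∀ n : ℕ, Tame (ObjectProperty.FullSubcategory fun h : H => deg (Y.obj h) = n)) :
    PowerSeries.mk (fun n : ℕ =>
        chi (ObjectProperty.FullSubcategory fun p : G × H => deg (X.obj p.1) + deg (Y.obj p.2) = n)) =
      PowerSeries.mk (fun n : ℕ => chi (ObjectProperty.FullSubcategory fun g : G => deg (X.obj g) = n)) *
        PowerSeries.mk (fun n : ℕ => chi (ObjectProperty.FullSubcategory fun h : H => deg (Y.obj h) = n)) := by
  ext n
  rw [PowerSeries.coeff_mk, PowerSeries.coeff_mul]
  simp only [PowerSeries.coeff_mk]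
  exact chi_prod_grade_eq_sum_antidiagonal (fun g => deg (X.obj g)) (fun h => deg (Y.obj h))
    (fun _ _ e => deg_eq_of_iso (X.mapIso e)) (fun _ _ e => deg_eq_of_iso (Y.mapIso e))
    (fun i => (hG i).2.2) (fun j => (hH j).2.2) n
end
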